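/- arXiv:2601.03576 — 2 statements merged into one kernel-verified Lean document; each statement's English description precedes it below -/
import Mathlib

section
/- Under the frame setup on ℝ_t × ℝ²_x with S, v of class C³ and φ : ℝ × ℝ² → ℝ of class C², suppose S satisfies the Ishimori evolution equation ∂_t S = S × (∂₁² S − ∂₂² S) + κ ( ∂₁φ · ∂₁ S + ∂₂φ · ∂₂ S ) pointwise for some κ ∈ ℝ. Then for each m ∈ {1,2} one has the pointwise covariant Schrödinger equation i D_t ψ_m = − ( D₁ D₁ ψ_m − D₂ D₂ ψ_m ) − i ( q_{m1} ψ₁ − q_{m2} ψ₂ ) + i κ ( ∂₁φ · D_m ψ₁ + ∂₂φ · D_m ψ₂ + ψ₁ ∂_m ∂₁ φ + ψ₂ ∂_m ∂₂ φ ), where q_{αβ} := Im( ψ_α · conj(ψ_β) ). -/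
open Matrix

/-- The time direction in `ℝ_t × ℝ²_x`. -/
def et : ℝ × ℝ × ℝ := (1, 0, 0)
/-- The first spatial direction in `ℝ_t × ℝ²_x`. -/
def e1 : ℝ × ℝ × ℝ := (0, 1, 0)
/-- The second spatial direction in `ℝ_t × ℝ²_x`. -/
def e2 : ℝ × ℝ × ℝ := (0, 0, 1)

/-- Partial derivative of `f` in direction `e`. -/
noncomputable def pd3 {E : Type*} [NormedAddCommGroup E] [NormedSpace ℝ E]
    (f : ℝ × ℝ × ℝ → E) (e : ℝ × ℝ × ℝ) (p : ℝ × ℝ × ℝ) : E :=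
  fderiv ℝ f p e

/-- The complexified differentiated field `ψ_α = ⟨v, ∂_α S⟩ + i ⟨w, ∂_α S⟩`. -/
noncomputable def framePsi (S v w : ℝ × ℝ × ℝ → Fin 3 → ℝ) (e p : ℝ × ℝ × ℝ) : ℂ :=
  ((v p ⬝ᵥ pd3 S e p : ℝ) : ℂ) + Complex.I * ((w p ⬝ᵥ pd3 S e p : ℝ) : ℂ)

/-- The real connection coefficient `A_α = ⟨w, ∂_α v⟩`. -/
noncomputable def frameA (v w : ℝ × ℝ × ℝ → Fin 3 → ℝ) (e p : ℝ × ℝ × ℝ) : ℝ :=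
  w p ⬝ᵥ pd3 v e p

/-- The covariant derivative `D_α f = ∂_α f + i A_α f`. -/
noncomputable def Dcov (A : ℝ × ℝ × ℝ → ℝ) (f : ℝ × ℝ × ℝ → ℂ) (e p : ℝ × ℝ × ℝ) : ℂ :=
  fderiv ℝ f p e + Complex.I * (A p : ℂ) * f p

/-- The curvature `q_{αβ} = Im(ψ_α conj(ψ_β))`. -/
noncomputable def frameQ (S v w : ℝ × ℝ × ℝ → Fin 3 → ℝ) (eα eβ p : ℝ × ℝ × ℝ) : ℝ :=
  (framePsi S v w eα p * (starRingEnd ℂ) (framePsi S v w eβ p)).im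

/-!
`ψ_α` is the coordinate of `∂_α S` in the complex frame `v + i w`, and the covariant
derivative `D_β ψ_α` is the coordinate of `∂_β ∂_α S`. Hence `D_β ψ_α = D_α ψ_β`, and the
curvature of the connection is `∂_β A_α - ∂_α A_β = q_{βα}`. In frame coordinates `S × ·` acts
as multiplication by `i`, so the Ishimori equation reads
`ψ_t = i (D₁ψ₁ - D₂ψ₂) + κ (∂₁φ ψ₁ + ∂₂φ ψ₂)`. Finally `i D_t ψ_m = i D_m ψ_t`, and commuting
`D_m` past `D_j` (which costs `i q_{mj} ψ_j`) together with `D_m ψ_j = D_j ψ_m` gives the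
equation.
-/

open Complex

section Calculus

variable {F : Type*} [NormedAddCommGroup F] [NormedSpace ℝ F] {p : ℝ × ℝ × ℝ}

theorem ContDiff.dotProduct {E ι : Type*} [NormedAddCommGroup E] [NormedSpace ℝ E] [Fintype ι]
    {n : WithTop ℕ∞} {f g : E → ι → ℝ} (hf : ContDiff ℝ n f) (hg : ContDiff ℝ n g) :
    ContDiff ℝ n fun q => f q ⬝ᵥ g q :=
  ContDiff.sum fun i _ => (contDiff_pi.1 hf i).mul (contDiff_pi.1 hg i)

theorem Differentiable.dotProduct {E ι : Type*} [NormedAddCommGroup E] [NormedSpace ℝ E]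
    [Fintype ι] {f g : E → ι → ℝ} (hf : Differentiable ℝ f) (hg : Differentiable ℝ g) :
    Differentiable ℝ fun q => f q ⬝ᵥ g q :=
  Differentiable.fun_sum fun i _ => (differentiable_pi.1 hf i).mul (differentiable_pi.1 hg i)

theorem ContDiff.cross {E : Type*} [NormedAddCommGroup E] [NormedSpace ℝ E] {n : WithTop ℕ∞}
    {f g : E → Fin 3 → ℝ} (hf : ContDiff ℝ n f) (hg : ContDiff ℝ n g) :
    ContDiff ℝ n fun q => f q ⨯₃ g q :=
  ((crossProduct (R := ℝ)).toContinuousBilinearMap.contDiff.comp hf).clm_apply hg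

theorem Differentiable.cross {E : Type*} [NormedAddCommGroup E] [NormedSpace ℝ E]
    {f g : E → Fin 3 → ℝ} (hf : Differentiable ℝ f) (hg : Differentiable ℝ g) :
    Differentiable ℝ fun q => f q ⨯₃ g q :=
  ((crossProduct (R := ℝ)).toContinuousBilinearMap.differentiable.comp hf).clm_apply hg

theorem contDiff_pd3 {m n : WithTop ℕ∞} {f : ℝ × ℝ × ℝ → F} (hf : ContDiff ℝ n f)
    (hmn : m + 1 ≤ n) (e : ℝ × ℝ × ℝ) : ContDiff ℝ m (pd3 f e) :=
  (hf.fderiv_right hmn).clm_apply contDiff_const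

theorem pd3_pd3_comm {f : ℝ × ℝ × ℝ → F} (hf : ContDiff ℝ 2 f) (α β p : ℝ × ℝ × ℝ) :
    pd3 (pd3 f α) β p = pd3 (pd3 f β) α p := by
  have hdf : DifferentiableAt ℝ (fderiv ℝ f) p :=
    (hf.fderiv_right (m := 1) le_rfl).differentiable one_ne_zero p
  have hpd : ∀ γ δ, pd3 (pd3 f γ) δ p = fderiv ℝ (fderiv ℝ f) p δ γ := fun γ δ => by
    change fderiv ℝ (fun q => fderiv ℝ f q γ) p δ = _
    simp [fderiv_clm_apply hdf (differentiableAt_const γ)]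
  rw [hpd, hpd, (hf.contDiffAt.isSymmSndFDerivAt (by simp) : IsSymmSndFDerivAt ℝ f p)]

theorem pd3_dotProduct {ι : Type*} [Fintype ι] {f g : ℝ × ℝ × ℝ → ι → ℝ}
    (hf : DifferentiableAt ℝ f p) (hg : DifferentiableAt ℝ g p) (e : ℝ × ℝ × ℝ) :
    pd3 (fun q => f q ⬝ᵥ g q) e p = pd3 f e p ⬝ᵥ g p + f p ⬝ᵥ pd3 g e p := by
  have hsum : HasFDerivAt (fun q => ∑ i, f q i * g q i) _ p := HasFDerivAt.fun_sum
    fun i _ => (hasFDerivAt_pi'.1 hf.hasFDerivAt i).mul (hasFDerivAt_pi'.1 hg.hasFDerivAt i)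
  simp only [pd3, dotProduct, hsum.fderiv, ← Finset.sum_add_distrib]
  simp [add_comm, mul_comm]

theorem dotProduct_pd3_eq_neg {ι : Type*} [Fintype ι] {f g : ℝ × ℝ × ℝ → ι → ℝ} {c : ℝ}
    (hf : Differentiable ℝ f) (hg : Differentiable ℝ g) (hfg : ∀ q, f q ⬝ᵥ g q = c)
    (e p : ℝ × ℝ × ℝ) :
    f p ⬝ᵥ pd3 g e p = -(g p ⬝ᵥ pd3 f e p) := by
  have h := pd3_dotProduct (hf p) (hg p) e
  rw [funext hfg, dotProduct_comm (pd3 f e p)] at h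
  simp only [pd3, fderiv_const_apply, _root_.zero_apply] at h ⊢
  linarith

theorem dotProduct_pd3_self_eq_zero {ι : Type*} [Fintype ι] {f : ℝ × ℝ × ℝ → ι → ℝ} {c : ℝ}
    (hf : Differentiable ℝ f) (hff : ∀ q, f q ⬝ᵥ f q = c) (e p : ℝ × ℝ × ℝ) :
    f p ⬝ᵥ pd3 f e p = 0 := by
  linarith [dotProduct_pd3_eq_neg hf hf hff e p]

theorem pd3_ofReal_add_I_mul {a b : ℝ × ℝ × ℝ → ℝ} (ha : DifferentiableAt ℝ a p)
    (hb : DifferentiableAt ℝ b p) (e : ℝ × ℝ × ℝ) :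
    pd3 (fun q => (a q : ℂ) + I * b q) e p = pd3 a e p + I * pd3 b e p := by
  have h : HasFDerivAt (fun q => (a q : ℂ) + I * b q) _ p :=
    (ofRealCLM.hasFDerivAt.comp p ha.hasFDerivAt).add
      ((ofRealCLM.hasFDerivAt.comp p hb.hasFDerivAt).const_mul I)
  simp [pd3, h.fderiv]

end Calculus

section CovariantDerivative

variable {A B c : ℝ × ℝ × ℝ → ℝ} {f g : ℝ × ℝ × ℝ → ℂ} {p : ℝ × ℝ × ℝ}

theorem differentiable_Dcov (hf : ContDiff ℝ 2 f) (hA : Differentiable ℝ A) (e : ℝ × ℝ × ℝ) :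
    Differentiable ℝ (Dcov A f e) := by
  have hdf : Differentiable ℝ (pd3 f e) := (contDiff_pd3 hf le_rfl e).differentiable one_ne_zero
  exact hdf.add (((differentiable_const I).mul (ofRealCLM.differentiable.comp hA)).mul
    (hf.differentiable two_ne_zero))

theorem Dcov_add (hf : DifferentiableAt ℝ f p) (hg : DifferentiableAt ℝ g p) (e : ℝ × ℝ × ℝ) :
    Dcov A (fun q => f q + g q) e p = Dcov A f e p + Dcov A g e p := by
  simp only [Dcov, fderiv_fun_add hf hg, _root_.add_apply]
  ring

theorem Dcov_sub (hf : DifferentiableAt ℝ f p) (hg : DifferentiableAt ℝ g p) (e : ℝ × ℝ × ℝ) :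
    Dcov A (fun q => f q - g q) e p = Dcov A f e p - Dcov A g e p := by
  simp only [Dcov, fderiv_fun_sub hf hg, _root_.sub_apply]
  ring

theorem Dcov_const_mul (hf : DifferentiableAt ℝ f p) (z : ℂ) (e : ℝ × ℝ × ℝ) :
    Dcov A (fun q => z * f q) e p = z * Dcov A f e p := by
  simp only [Dcov, fderiv_const_mul hf z, _root_.smul_apply, smul_eq_mul]
  ring

theorem Dcov_ofReal_mul (hc : DifferentiableAt ℝ c p) (hf : DifferentiableAt ℝ f p)
    (e : ℝ × ℝ × ℝ) :
    Dcov A (fun q => (c q : ℂ) * f q) e p = pd3 c e p * f p + c p * Dcov A f e p := by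
  have h : HasFDerivAt (fun q => (c q : ℂ) * f q) _ p :=
    (ofRealCLM.hasFDerivAt.comp p hc.hasFDerivAt).mul hf.hasFDerivAt
  simp only [Dcov, pd3, h.fderiv, Function.comp_apply, ofRealCLM_apply, _root_.add_apply,
    _root_.smul_apply, smul_eq_mul, ContinuousLinearMap.comp_apply]
  ring

theorem pd3_Dcov {α : ℝ × ℝ × ℝ} (hf : DifferentiableAt ℝ f p)
    (hdf : DifferentiableAt ℝ (pd3 f α) p) (hA : DifferentiableAt ℝ A p) (β : ℝ × ℝ × ℝ) :
    pd3 (Dcov A f α) β p = pd3 (pd3 f α) β p + I * (pd3 A β p * f p + A p * pd3 f β p) := by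
  have h : HasFDerivAt (fun q => pd3 f α q + I * A q * f q) _ p := hdf.hasFDerivAt.add
    (((ofRealCLM.hasFDerivAt.comp p hA.hasFDerivAt).const_mul I).mul hf.hasFDerivAt)
  change fderiv ℝ (fun q => pd3 f α q + I * A q * f q) p β = _
  rw [h.fderiv]
  simp only [pd3, Function.comp_apply, ofRealCLM_apply, _root_.add_apply, _root_.smul_apply,
    smul_eq_mul, ContinuousLinearMap.comp_apply, add_right_inj]
  ring

theorem Dcov_Dcov_sub_Dcov_Dcov (hf : ContDiff ℝ 2 f) (hA : DifferentiableAt ℝ A p)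
    (hB : DifferentiableAt ℝ B p) (α β : ℝ × ℝ × ℝ) :
    Dcov B (Dcov A f α) β p - Dcov A (Dcov B f β) α p
      = I * (pd3 A β p - pd3 B α p : ℝ) * f p := by
  have hf1 : DifferentiableAt ℝ f p := hf.differentiable two_ne_zero p
  have hdf : ∀ γ, DifferentiableAt ℝ (pd3 f γ) p := fun γ =>
    (contDiff_pd3 hf (m := 1) le_rfl γ).differentiable one_ne_zero p
  change pd3 (Dcov A f α) β p + I * B p * Dcov A f α p
    - (pd3 (Dcov B f β) α p + I * A p * Dcov B f β p) = _
  rw [pd3_Dcov hf1 (hdf α) hA, pd3_Dcov hf1 (hdf β) hB, pd3_pd3_comm hf α β]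
  simp only [Dcov, pd3]
  push_cast
  ring

end CovariantDerivative

section FrameAlgebra

theorem Matrix.dotProduct_eq_sum_of_mul_transpose_eq_one {n R : Type*} [Fintype n]
    [DecidableEq n] [CommRing R] {M : Matrix n n R} (hM : M * Mᵀ = 1) (x y : n → R) :
    x ⬝ᵥ y = ∑ i, (M i ⬝ᵥ x) * (M i ⬝ᵥ y) := by
  have hMM : Mᵀ * M = 1 := mul_eq_one_comm.mp hM
  calc x ⬝ᵥ y = x ⬝ᵥ (Mᵀ *ᵥ (M *ᵥ y)) := by rw [mulVec_mulVec, hMM, one_mulVec]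
    _ = (M *ᵥ x) ⬝ᵥ (M *ᵥ y) := by rw [dotProduct_mulVec, vecMul_transpose]
    _ = ∑ i, (M i ⬝ᵥ x) * (M i ⬝ᵥ y) := rfl

theorem dotProduct_eq_of_orthonormal {s u : Fin 3 → ℝ} (hs : s ⬝ᵥ s = 1) (hu : u ⬝ᵥ u = 1)
    (hsu : s ⬝ᵥ u = 0) (x y : Fin 3 → ℝ) :
    x ⬝ᵥ y = (s ⬝ᵥ x) * (s ⬝ᵥ y) + (u ⬝ᵥ x) * (u ⬝ᵥ y)
      + (s ⨯₃ u ⬝ᵥ x) * (s ⨯₃ u ⬝ᵥ y) := by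
  have hw : s ⨯₃ u ⬝ᵥ s ⨯₃ u = 1 := by
    rw [cross_dot_cross, hs, hu, hsu]; ring
  have hM : Matrix.of ![s, u, s ⨯₃ u] * (Matrix.of ![s, u, s ⨯₃ u])ᵀ = 1 := by
    ext i j
    change ![s, u, s ⨯₃ u] i ⬝ᵥ ![s, u, s ⨯₃ u] j = _
    fin_cases i <;> fin_cases j <;>
      simp [hs, hu, hw, hsu, dotProduct_comm u s, dotProduct_comm (s ⨯₃ u)]
  rw [Matrix.dotProduct_eq_sum_of_mul_transpose_eq_one hM x y, Fin.sum_univ_three]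
  rfl

def frameCoord (v w : Fin 3 → ℝ) : (Fin 3 → ℝ) →ₗ[ℝ] ℂ where
  toFun x := ((v ⬝ᵥ x : ℝ) : ℂ) + I * ((w ⬝ᵥ x : ℝ) : ℂ)
  map_add' x y := by simp only [dotProduct_add, ofReal_add]; ring
  map_smul' a x := by
    simp only [dotProduct_smul, smul_eq_mul, ofReal_mul, RingHom.id_apply, real_smul]; ring

theorem frameCoord_apply (v w x : Fin 3 → ℝ) :
    frameCoord v w x = ((v ⬝ᵥ x : ℝ) : ℂ) + I * ((w ⬝ᵥ x : ℝ) : ℂ) := rfl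

theorem frameCoord_cross {s v : Fin 3 → ℝ} (hs : s ⬝ᵥ s = 1) (hsv : s ⬝ᵥ v = 0)
    (x : Fin 3 → ℝ) : frameCoord v (s ⨯₃ v) (s ⨯₃ x) = I * frameCoord v (s ⨯₃ v) x := by
  have hv : v ⬝ᵥ s ⨯₃ x = -(s ⨯₃ v ⬝ᵥ x) := by
    rw [triple_product_permutation, triple_product_permutation, ← cross_anticomm,
      dotProduct_neg, dotProduct_comm]
  have hw : s ⨯₃ v ⬝ᵥ s ⨯₃ x = v ⬝ᵥ x := by
    rw [cross_dot_cross, hs, dotProduct_comm v s, hsv]; ring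
  simp only [frameCoord_apply, hv, hw, ofReal_neg]
  linear_combination (-((s ⨯₃ v ⬝ᵥ x : ℝ) : ℂ)) * I_sq

theorem im_frameCoord_mul_conj (v w x y : Fin 3 → ℝ) :
    (frameCoord v w x * starRingEnd ℂ (frameCoord v w y)).im
      = (w ⬝ᵥ x) * (v ⬝ᵥ y) - (v ⬝ᵥ x) * (w ⬝ᵥ y) := by
  have hre : ∀ z, (frameCoord v w z).re = v ⬝ᵥ z := fun z => by simp [frameCoord_apply]
  have him : ∀ z, (frameCoord v w z).im = w ⬝ᵥ z := fun z => by simp [frameCoord_apply]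
  rw [mul_im, conj_re, conj_im, hre, hre, him, him]
  ring

theorem framePsi_eq_frameCoord (S v w : ℝ × ℝ × ℝ → Fin 3 → ℝ) (e p : ℝ × ℝ × ℝ) :
    framePsi S v w e p = frameCoord (v p) (w p) (pd3 S e p) := rfl

end FrameAlgebra

structure IsOrthonormalFrame (S v w : ℝ × ℝ × ℝ → Fin 3 → ℝ) : Prop where
  S_dotProduct_S : ∀ p, S p ⬝ᵥ S p = 1
  v_dotProduct_v : ∀ p, v p ⬝ᵥ v p = 1
  S_dotProduct_v : ∀ p, S p ⬝ᵥ v p = 0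
  w_eq_cross : ∀ p, w p = S p ⨯₃ v p

namespace IsOrthonormalFrame

variable {S v w : ℝ × ℝ × ℝ → Fin 3 → ℝ}

theorem w_dotProduct_w (hF : IsOrthonormalFrame S v w) (p : ℝ × ℝ × ℝ) : w p ⬝ᵥ w p = 1 := by
  rw [hF.w_eq_cross, cross_dot_cross, hF.S_dotProduct_S, hF.v_dotProduct_v,
    hF.S_dotProduct_v, dotProduct_comm (v p), hF.S_dotProduct_v]
  ring

theorem S_dotProduct_w (hF : IsOrthonormalFrame S v w) (p : ℝ × ℝ × ℝ) : S p ⬝ᵥ w p = 0 := by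
  rw [hF.w_eq_cross, dot_self_cross]

theorem v_dotProduct_w (hF : IsOrthonormalFrame S v w) (p : ℝ × ℝ × ℝ) : v p ⬝ᵥ w p = 0 := by
  rw [hF.w_eq_cross, dot_cross_self]

theorem dotProduct_eq (hF : IsOrthonormalFrame S v w) (p : ℝ × ℝ × ℝ) (x y : Fin 3 → ℝ) :
    x ⬝ᵥ y = (S p ⬝ᵥ x) * (S p ⬝ᵥ y) + (v p ⬝ᵥ x) * (v p ⬝ᵥ y) + (w p ⬝ᵥ x) * (w p ⬝ᵥ y) := by
  rw [hF.w_eq_cross]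
  exact dotProduct_eq_of_orthonormal (hF.S_dotProduct_S p) (hF.v_dotProduct_v p)
    (hF.S_dotProduct_v p) x y

theorem contDiff_w {n : WithTop ℕ∞} (hF : IsOrthonormalFrame S v w) (hS : ContDiff ℝ n S)
    (hv : ContDiff ℝ n v) : ContDiff ℝ n w := by
  rw [funext hF.w_eq_cross]
  exact hS.cross hv

theorem differentiable_w (hF : IsOrthonormalFrame S v w) (hS : Differentiable ℝ S)
    (hv : Differentiable ℝ v) : Differentiable ℝ w := by
  rw [funext hF.w_eq_cross]
  exact hS.cross hv

theorem pd3_v_dotProduct_pd3_S (hF : IsOrthonormalFrame S v w) (hS : Differentiable ℝ S)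
    (hv : Differentiable ℝ v) (α β p : ℝ × ℝ × ℝ) :
    pd3 v β p ⬝ᵥ pd3 S α p = frameA v w β p * (w p ⬝ᵥ pd3 S α p) := by
  rw [hF.dotProduct_eq p, dotProduct_pd3_self_eq_zero hS hF.S_dotProduct_S,
    dotProduct_pd3_self_eq_zero hv hF.v_dotProduct_v, frameA]
  ring

theorem pd3_w_dotProduct_pd3_S (hF : IsOrthonormalFrame S v w) (hS : Differentiable ℝ S)
    (hv : Differentiable ℝ v) (α β p : ℝ × ℝ × ℝ) :
    pd3 w β p ⬝ᵥ pd3 S α p = -(frameA v w β p * (v p ⬝ᵥ pd3 S α p)) := by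
  have hw := hF.differentiable_w hS hv
  rw [hF.dotProduct_eq p, dotProduct_pd3_self_eq_zero hS hF.S_dotProduct_S,
    dotProduct_pd3_self_eq_zero hw hF.w_dotProduct_w,
    dotProduct_pd3_eq_neg hv hw hF.v_dotProduct_w, frameA]
  ring

theorem pd3_w_dotProduct_pd3_v (hF : IsOrthonormalFrame S v w) (hS : Differentiable ℝ S)
    (hv : Differentiable ℝ v) (α β p : ℝ × ℝ × ℝ) :
    pd3 w β p ⬝ᵥ pd3 v α p = (v p ⬝ᵥ pd3 S α p) * (w p ⬝ᵥ pd3 S β p) := by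
  have hw := hF.differentiable_w hS hv
  rw [hF.dotProduct_eq p, dotProduct_pd3_self_eq_zero hv hF.v_dotProduct_v,
    dotProduct_pd3_self_eq_zero hw hF.w_dotProduct_w,
    dotProduct_pd3_eq_neg hS hw hF.S_dotProduct_w, dotProduct_pd3_eq_neg hS hv hF.S_dotProduct_v]
  ring

theorem contDiff_framePsi (hF : IsOrthonormalFrame S v w) (hS : ContDiff ℝ 3 S)
    (hv : ContDiff ℝ 2 v) (α : ℝ × ℝ × ℝ) : ContDiff ℝ 2 (framePsi S v w α) := by
  have hdS : ContDiff ℝ 2 (pd3 S α) := contDiff_pd3 hS le_rfl α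
  have hw : ContDiff ℝ 2 w := hF.contDiff_w (hS.of_le (by norm_num)) hv
  exact (ofRealCLM.contDiff.comp (hv.dotProduct hdS)).add
    (contDiff_const.mul (ofRealCLM.contDiff.comp (hw.dotProduct hdS)))

theorem differentiable_frameA (hF : IsOrthonormalFrame S v w) (hS : Differentiable ℝ S)
    (hv : ContDiff ℝ 2 v) (α : ℝ × ℝ × ℝ) : Differentiable ℝ (frameA v w α) :=
  (hF.differentiable_w hS (hv.differentiable two_ne_zero)).dotProduct
    ((contDiff_pd3 hv le_rfl α).differentiable one_ne_zero)

theorem Dcov_framePsi (hF : IsOrthonormalFrame S v w) (hS : ContDiff ℝ 2 S)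
    (hv : Differentiable ℝ v) (α β p : ℝ × ℝ × ℝ) :
    Dcov (frameA v w β) (framePsi S v w α) β p = frameCoord (v p) (w p) (pd3 (pd3 S α) β p) := by
  have hS1 : Differentiable ℝ S := hS.differentiable two_ne_zero
  have hw : Differentiable ℝ w := hF.differentiable_w hS1 hv
  have hdS : Differentiable ℝ (pd3 S α) :=
    (contDiff_pd3 hS (m := 1) le_rfl α).differentiable one_ne_zero
  have hψ : pd3 (framePsi S v w α) β p
      = ((pd3 v β p ⬝ᵥ pd3 S α p + v p ⬝ᵥ pd3 (pd3 S α) β p : ℝ) : ℂ)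
        + I * ((pd3 w β p ⬝ᵥ pd3 S α p + w p ⬝ᵥ pd3 (pd3 S α) β p : ℝ) : ℂ) := by
    rw [← pd3_dotProduct (hv p) (hdS p), ← pd3_dotProduct (hw p) (hdS p)]
    exact pd3_ofReal_add_I_mul (hv.dotProduct hdS p) (hw.dotProduct hdS p) β
  change pd3 (framePsi S v w α) β p + I * frameA v w β p * framePsi S v w α p = _
  rw [hψ, hF.pd3_v_dotProduct_pd3_S hS1 hv, hF.pd3_w_dotProduct_pd3_S hS1 hv,
    framePsi_eq_frameCoord, frameCoord_apply, frameCoord_apply]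
  push_cast
  linear_combination (frameA v w β p * ((w p ⬝ᵥ pd3 S α p : ℝ) : ℂ)) * I_sq

theorem Dcov_framePsi_comm (hF : IsOrthonormalFrame S v w) (hS : ContDiff ℝ 2 S)
    (hv : Differentiable ℝ v) (α β : ℝ × ℝ × ℝ) :
    Dcov (frameA v w β) (framePsi S v w α) β = Dcov (frameA v w α) (framePsi S v w β) α :=
  funext fun p => by rw [hF.Dcov_framePsi hS hv, hF.Dcov_framePsi hS hv, pd3_pd3_comm hS]

theorem pd3_frameA_sub (hF : IsOrthonormalFrame S v w) (hS : Differentiable ℝ S)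
    (hv : ContDiff ℝ 2 v) (α β p : ℝ × ℝ × ℝ) :
    pd3 (frameA v w α) β p - pd3 (frameA v w β) α p = frameQ S v w β α p := by
  have hv1 : Differentiable ℝ v := hv.differentiable two_ne_zero
  have hw : Differentiable ℝ w := hF.differentiable_w hS hv1
  have hA : ∀ γ δ, pd3 (frameA v w γ) δ p
      = pd3 w δ p ⬝ᵥ pd3 v γ p + w p ⬝ᵥ pd3 (pd3 v γ) δ p := fun γ δ =>
    pd3_dotProduct (hw p) ((contDiff_pd3 hv (m := 1) le_rfl γ).differentiable one_ne_zero p) δ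
  rw [hA, hA, hF.pd3_w_dotProduct_pd3_v hS hv1, hF.pd3_w_dotProduct_pd3_v hS hv1,
    pd3_pd3_comm hv, frameQ, framePsi_eq_frameCoord, framePsi_eq_frameCoord,
    im_frameCoord_mul_conj]
  ring

theorem framePsi_et_of_ishimori (hF : IsOrthonormalFrame S v w) (hS : ContDiff ℝ 2 S)
    (hv : Differentiable ℝ v) {φ : ℝ × ℝ × ℝ → ℝ} {κ : ℝ} {p : ℝ × ℝ × ℝ}
    (hIshimori : pd3 S et p = S p ⨯₃ (pd3 (pd3 S e1) e1 p - pd3 (pd3 S e2) e2 p)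
      + κ • (pd3 φ e1 p • pd3 S e1 p + pd3 φ e2 p • pd3 S e2 p)) :
    framePsi S v w et p
      = I * (Dcov (frameA v w e1) (framePsi S v w e1) e1 p
          - Dcov (frameA v w e2) (framePsi S v w e2) e2 p)
        + κ * (pd3 φ e1 p * framePsi S v w e1 p + pd3 φ e2 p * framePsi S v w e2 p) := by
  rw [hF.Dcov_framePsi hS hv, hF.Dcov_framePsi hS hv, framePsi_eq_frameCoord,
    framePsi_eq_frameCoord, framePsi_eq_frameCoord, hIshimori, hF.w_eq_cross,
    map_add, frameCoord_cross (hF.S_dotProduct_S p) (hF.S_dotProduct_v p)]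
  simp only [map_add, map_sub, map_smul, real_smul]

theorem Dcov_Dcov_framePsi (hF : IsOrthonormalFrame S v w) (hS : ContDiff ℝ 3 S)
    (hv : ContDiff ℝ 2 v) (m j p : ℝ × ℝ × ℝ) :
    Dcov (frameA v w m) (Dcov (frameA v w j) (framePsi S v w j) j) m p
      = Dcov (frameA v w j) (Dcov (frameA v w j) (framePsi S v w m) j) j p
        + I * frameQ S v w m j p * framePsi S v w j p := by
  have hS2 : ContDiff ℝ 2 S := hS.of_le (by norm_num)
  have hS1 : Differentiable ℝ S := hS2.differentiable two_ne_zero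
  have hcomm := Dcov_Dcov_sub_Dcov_Dcov (hF.contDiff_framePsi hS hv j)
    (hF.differentiable_frameA hS1 hv j p) (hF.differentiable_frameA hS1 hv m p) j m
  rw [hF.pd3_frameA_sub hS1 hv, hF.Dcov_framePsi_comm hS2 (hv.differentiable two_ne_zero) j m]
    at hcomm
  linear_combination hcomm

theorem Dcov_framePsi_et_of_ishimori (hF : IsOrthonormalFrame S v w) (hS : ContDiff ℝ 3 S)
    (hv : ContDiff ℝ 2 v) {φ : ℝ × ℝ × ℝ → ℝ} (hφ : ContDiff ℝ 2 φ) {κ : ℝ}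
    (hIshimori : ∀ q, pd3 S et q = S q ⨯₃ (pd3 (pd3 S e1) e1 q - pd3 (pd3 S e2) e2 q)
      + κ • (pd3 φ e1 q • pd3 S e1 q + pd3 φ e2 q • pd3 S e2 q)) (m p : ℝ × ℝ × ℝ) :
    Dcov (frameA v w m) (framePsi S v w et) m p
      = I * (Dcov (frameA v w m) (Dcov (frameA v w e1) (framePsi S v w e1) e1) m p
          - Dcov (frameA v w m) (Dcov (frameA v w e2) (framePsi S v w e2) e2) m p)
        + κ * (pd3 (pd3 φ e1) m p * framePsi S v w e1 p
            + pd3 φ e1 p * Dcov (frameA v w m) (framePsi S v w e1) m p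
          + (pd3 (pd3 φ e2) m p * framePsi S v w e2 p
            + pd3 φ e2 p * Dcov (frameA v w m) (framePsi S v w e2) m p)) := by
  have hS2 : ContDiff ℝ 2 S := hS.of_le (by norm_num)
  have hS1 : Differentiable ℝ S := hS2.differentiable two_ne_zero
  have hv1 : Differentiable ℝ v := hv.differentiable two_ne_zero
  have hψ : ∀ α, Differentiable ℝ (framePsi S v w α) := fun α =>
    (hF.contDiff_framePsi hS hv α).differentiable two_ne_zero
  have hDψ : ∀ α, Differentiable ℝ (Dcov (frameA v w α) (framePsi S v w α) α) := fun α =>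
    differentiable_Dcov (hF.contDiff_framePsi hS hv α) (hF.differentiable_frameA hS1 hv α) α
  have hdφ : ∀ α, Differentiable ℝ (pd3 φ α) := fun α =>
    (contDiff_pd3 hφ (m := 1) le_rfl α).differentiable one_ne_zero
  rw [show framePsi S v w et = fun q => _ from
      funext fun q => hF.framePsi_et_of_ishimori hS2 hv1 (hIshimori q),
    Dcov_add (by fun_prop) (by fun_prop), Dcov_const_mul (by fun_prop),
    Dcov_sub (hDψ e1 p) (hDψ e2 p), Dcov_const_mul (by fun_prop),
    Dcov_add (by fun_prop) (by fun_prop), Dcov_ofReal_mul (hdφ e1 p) (hψ e1 p),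
    Dcov_ofReal_mul (hdφ e2 p) (hψ e2 p)]

end IsOrthonormalFrame

/-- For a solution of the Ishimori evolution equation, `ψ_m` (`m = 1, 2`) satisfies the
covariant hyperbolic Schrödinger equation
`i D_t ψ_m = −(D₁D₁ψ_m − D₂D₂ψ_m) − i(q_{m1}ψ₁ − q_{m2}ψ₂)
  + iκ(∂₁φ D_mψ₁ + ∂₂φ D_mψ₂ + ψ₁ ∂_m∂₁φ + ψ₂ ∂_m∂₂φ)`. -/
theorem covariant_schrodinger_ishimori
    (S v : ℝ × ℝ × ℝ → Fin 3 → ℝ)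
    (hS : ContDiff ℝ 3 S) (hv : ContDiff ℝ 3 v)
    (hS1 : ∀ p, S p ⬝ᵥ S p = 1) (hv1 : ∀ p, v p ⬝ᵥ v p = 1)
    (hSv : ∀ p, S p ⬝ᵥ v p = 0)
    (w : ℝ × ℝ × ℝ → Fin 3 → ℝ) (hw : ∀ p, w p = crossProduct (S p) (v p))
    (φ : ℝ × ℝ × ℝ → ℝ) (hφ : ContDiff ℝ 2 φ) (κ : ℝ)
    (hIshimori : ∀ p : ℝ × ℝ × ℝ,
      pd3 S et p =
        crossProduct (S p) (pd3 (pd3 S e1) e1 p - pd3 (pd3 S e2) e2 p) +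
          κ • ((fderiv ℝ φ p e1) • pd3 S e1 p + (fderiv ℝ φ p e2) • pd3 S e2 p)) :
    ∀ em ∈ ({e1, e2} : Set (ℝ × ℝ × ℝ)), ∀ p : ℝ × ℝ × ℝ,
      Complex.I * Dcov (frameA v w et) (framePsi S v w em) et p =
        -(Dcov (frameA v w e1) (fun q => Dcov (frameA v w e1) (framePsi S v w em) e1 q) e1 p
            - Dcov (frameA v w e2) (fun q => Dcov (frameA v w e2) (framePsi S v w em) e2 q) e2 p)
          - Complex.I * (((frameQ S v w em e1 p : ℝ) : ℂ) * framePsi S v w e1 p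
            - ((frameQ S v w em e2 p : ℝ) : ℂ) * framePsi S v w e2 p)
          + Complex.I * (κ : ℂ) *
            (((fderiv ℝ φ p e1 : ℝ) : ℂ) * Dcov (frameA v w em) (framePsi S v w e1) em p
              + ((fderiv ℝ φ p e2 : ℝ) : ℂ) * Dcov (frameA v w em) (framePsi S v w e2) em p
              + framePsi S v w e1 p * ((pd3 (pd3 φ e1) em p : ℝ) : ℂ)
              + framePsi S v w e2 p * ((pd3 (pd3 φ e2) em p : ℝ) : ℂ)) := by
  intro em _ p
  have hF : IsOrthonormalFrame S v w := ⟨hS1, hv1, hSv, hw⟩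
  have hv2 : ContDiff ℝ 2 v := hv.of_le (by norm_num)
  have hDψt := hF.Dcov_framePsi_et_of_ishimori hS hv2 hφ hIshimori em p
  rw [hF.Dcov_Dcov_framePsi hS hv2, hF.Dcov_Dcov_framePsi hS hv2] at hDψt
  rw [hF.Dcov_framePsi_comm (hS.of_le (by norm_num)) (hv2.differentiable two_ne_zero) em et]
  change _ = _ + I * κ * (pd3 φ e1 p * _ + pd3 φ e2 p * _ + _ + _)
  linear_combination I * hDψt
    + (Dcov (frameA v w e1) (Dcov (frameA v w e1) (framePsi S v w em) e1) e1 p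
        - Dcov (frameA v w e2) (Dcov (frameA v w e2) (framePsi S v w em) e2) e2 p
        + I * (frameQ S v w em e1 p * framePsi S v w e1 p
          - frameQ S v w em e2 p * framePsi S v w e2 p)) * I_sq
end

section
/- Under the frame setup on ℝ_s × ℝ²_x, suppose S satisfies the harmonic map heat flow equation pointwise: ∂_s S = ∂₁² S + ∂₂² S + S ( |∂₁ S|² + |∂₂ S|² ). Then pointwise ψ_s = D₁ ψ₁ + D₂ ψ₂. -/
/-!
Write `X = ∂_f S`, so that `ψ_f = ⟨v, X⟩ + i⟨w, X⟩`. Differentiating in direction `e` produces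
`⟨v, ∂_e X⟩ + i⟨w, ∂_e X⟩` plus the frame term `⟨∂_e v, X⟩ + i⟨∂_e w, X⟩`. As `X ⊥ S`, only the
`v`- and `w`-components of `∂_e v` and `∂_e w` matter, and by orthonormality these are `A_e w` and
`-A_e v`; hence the frame term equals `-i A_e ψ_f` and cancels against the connection, giving
`D_e ψ_f = ⟨v, ∂_e ∂_f S⟩ + i⟨w, ∂_e ∂_f S⟩`. Summing over `e = f = 1, 2`, the heat flow turns
the right-hand side into `ψ_s`, because its nonlinear term is a multiple of `S`, which `v` and `w`
do not see.
-/

open Matrix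

/-- The heat-time direction in `ℝ_s × ℝ²_x`. -/
def es : ℝ × ℝ × ℝ := (1, 0, 0)
section Calculus

variable {𝕜 : Type*} [NontriviallyNormedField 𝕜] [CompleteSpace 𝕜]
  {E : Type*} [NormedAddCommGroup E] [NormedSpace 𝕜 E] {p : E}
  {ι : Type*} [Fintype ι] {f g : E → ι → 𝕜}

theorem DifferentiableAt.dotProduct (hf : DifferentiableAt 𝕜 f p) (hg : DifferentiableAt 𝕜 g p) :
    DifferentiableAt 𝕜 (fun q => f q ⬝ᵥ g q) p :=
  ((dotProductBilin 𝕜 𝕜 : (ι → 𝕜) →ₗ[𝕜] _ →ₗ[𝕜] 𝕜).toContinuousBilinearMap.hasFDerivAt_of_bilinear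
    hf.hasFDerivAt hg.hasFDerivAt).differentiableAt

theorem fderiv_dotProduct_apply (hf : DifferentiableAt 𝕜 f p) (hg : DifferentiableAt 𝕜 g p)
    (e : E) :
    fderiv 𝕜 (fun q => f q ⬝ᵥ g q) p e = fderiv 𝕜 f p e ⬝ᵥ g p + f p ⬝ᵥ fderiv 𝕜 g p e := by
  have hB := (dotProductBilin 𝕜 𝕜 : (ι → 𝕜) →ₗ[𝕜] _ →ₗ[𝕜] 𝕜).toContinuousBilinearMap
    |>.fderiv_of_bilinear hf hg
  simp only [LinearMap.toContinuousBilinearMap_apply, dotProductBilin_apply_apply] at hB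
  rw [hB]
  simp [add_comm]

theorem dotProduct_fderiv_eq_neg_of_dotProduct_const {c : 𝕜} (hf : DifferentiableAt 𝕜 f p)
    (hg : DifferentiableAt 𝕜 g p) (hfg : ∀ q, f q ⬝ᵥ g q = c) (e : E) :
    f p ⬝ᵥ fderiv 𝕜 g p e = -(fderiv 𝕜 f p e ⬝ᵥ g p) := by
  have h := fderiv_dotProduct_apply hf hg e
  simp only [hfg, fderiv_fun_const, Pi.zero_apply, _root_.zero_apply] at h
  linear_combination -h

theorem dotProduct_fderiv_self_eq_zero [CharZero 𝕜] {c : 𝕜} (hf : DifferentiableAt 𝕜 f p)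
    (hff : ∀ q, f q ⬝ᵥ f q = c) (e : E) : f p ⬝ᵥ fderiv 𝕜 f p e = 0 :=
  self_eq_neg.mp <| by
    simpa only [dotProduct_comm (fderiv 𝕜 f p e)] using
      dotProduct_fderiv_eq_neg_of_dotProduct_const hf hf hff e

theorem DifferentiableAt.crossProduct {f g : E → Fin 3 → 𝕜}
    (hf : DifferentiableAt 𝕜 f p) (hg : DifferentiableAt 𝕜 g p) :
    DifferentiableAt 𝕜 (fun q => f q ⨯₃ g q) p :=
  ((_root_.crossProduct : (Fin 3 → 𝕜) →ₗ[𝕜] _ →ₗ[𝕜] _).toContinuousBilinearMap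
    |>.hasFDerivAt_of_bilinear hf.hasFDerivAt hg.hasFDerivAt).differentiableAt

end Calculus

section ComplexValued

variable {E : Type*} [NormedAddCommGroup E] [NormedSpace ℝ E] {p : E}

theorem fderiv_ofReal_add_I_mul_apply {a b : E → ℝ} (ha : DifferentiableAt ℝ a p)
    (hb : DifferentiableAt ℝ b p) (e : E) :
    fderiv ℝ (fun q => (a q : ℂ) + Complex.I * b q) p e
      = (fderiv ℝ a p e : ℂ) + Complex.I * fderiv ℝ b p e := by
  have ha' : HasFDerivAt (fun q => (a q : ℂ)) (Complex.ofRealCLM.comp (fderiv ℝ a p)) p :=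
    Complex.ofRealCLM.hasFDerivAt.comp p ha.hasFDerivAt
  have hb' : HasFDerivAt (fun q => (b q : ℂ)) (Complex.ofRealCLM.comp (fderiv ℝ b p)) p :=
    Complex.ofRealCLM.hasFDerivAt.comp p hb.hasFDerivAt
  rw [(ha'.fun_add (hb'.const_mul Complex.I)).fderiv]
  simp

end ComplexValued

theorem dotProduct_eq_of_orthonormal_of_dotProduct_eq_zero {R : Type*} [CommRing R]
    {a b x y : Fin 3 → R} (ha : a ⬝ᵥ a = 1) (hb : b ⬝ᵥ b = 1) (hab : a ⬝ᵥ b = 0)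
    (hx : a ⬝ᵥ x = 0) :
    y ⬝ᵥ x = (b ⬝ᵥ y) * (b ⬝ᵥ x) + (a ⨯₃ b ⬝ᵥ y) * (a ⨯₃ b ⬝ᵥ x) := by
  simp only [vec3_dotProduct, cross_apply, Matrix.cons_val] at *
  grind

structure IsCrossFrame {α : Type*} (S v w : α → Fin 3 → ℝ) : Prop where
  dotProduct_S_self : ∀ q, S q ⬝ᵥ S q = 1
  dotProduct_v_self : ∀ q, v q ⬝ᵥ v q = 1
  dotProduct_S_v : ∀ q, S q ⬝ᵥ v q = 0
  eq_cross : ∀ q, w q = S q ⨯₃ v q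

namespace IsCrossFrame

variable {α : Type*} {S v w : α → Fin 3 → ℝ}

theorem dotProduct_w_self (h : IsCrossFrame S v w) (q : α) : w q ⬝ᵥ w q = 1 := by
  rw [h.eq_cross, cross_dot_cross, h.dotProduct_S_self, h.dotProduct_v_self,
    dotProduct_comm (v q), h.dotProduct_S_v]
  ring

theorem dotProduct_v_w (h : IsCrossFrame S v w) (q : α) : v q ⬝ᵥ w q = 0 := by
  rw [h.eq_cross, dot_cross_self]

theorem dotProduct_w_S (h : IsCrossFrame S v w) (q : α) : w q ⬝ᵥ S q = 0 := by
  rw [h.eq_cross, dotProduct_comm, dot_self_cross]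

theorem dotProduct_eq (h : IsCrossFrame S v w) {q : α} {x : Fin 3 → ℝ} (hx : S q ⬝ᵥ x = 0)
    (y : Fin 3 → ℝ) : y ⬝ᵥ x = (v q ⬝ᵥ y) * (v q ⬝ᵥ x) + (w q ⬝ᵥ y) * (w q ⬝ᵥ x) := by
  rw [h.eq_cross]
  exact dotProduct_eq_of_orthonormal_of_dotProduct_eq_zero (h.dotProduct_S_self q)
    (h.dotProduct_v_self q) (h.dotProduct_S_v q) hx

variable {E : Type*} [NormedAddCommGroup E] [NormedSpace ℝ E] {S v w : E → Fin 3 → ℝ} {p : E}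

theorem differentiableAt_w (h : IsCrossFrame S v w) (hS : DifferentiableAt ℝ S p)
    (hv : DifferentiableAt ℝ v p) : DifferentiableAt ℝ w p := by
  rw [show w = fun q => S q ⨯₃ v q from funext h.eq_cross]
  exact hS.crossProduct hv

theorem dotProduct_fderiv_S (h : IsCrossFrame S v w) (hS : DifferentiableAt ℝ S p) (e : E) :
    S p ⬝ᵥ fderiv ℝ S p e = 0 :=
  dotProduct_fderiv_self_eq_zero hS h.dotProduct_S_self e

theorem fderiv_v_dotProduct (h : IsCrossFrame S v w) (hv : DifferentiableAt ℝ v p)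
    {x : Fin 3 → ℝ} (hx : S p ⬝ᵥ x = 0) (e : E) :
    fderiv ℝ v p e ⬝ᵥ x = (w p ⬝ᵥ fderiv ℝ v p e) * (w p ⬝ᵥ x) := by
  rw [h.dotProduct_eq hx, dotProduct_fderiv_self_eq_zero hv h.dotProduct_v_self]
  ring

theorem fderiv_w_dotProduct (h : IsCrossFrame S v w) (hS : DifferentiableAt ℝ S p)
    (hv : DifferentiableAt ℝ v p) {x : Fin 3 → ℝ} (hx : S p ⬝ᵥ x = 0) (e : E) :
    fderiv ℝ w p e ⬝ᵥ x = -((w p ⬝ᵥ fderiv ℝ v p e) * (v p ⬝ᵥ x)) := by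
  have hw := h.differentiableAt_w hS hv
  rw [h.dotProduct_eq hx, dotProduct_fderiv_self_eq_zero hw h.dotProduct_w_self,
    dotProduct_fderiv_eq_neg_of_dotProduct_const hv hw h.dotProduct_v_w e, dotProduct_comm]
  ring

end IsCrossFrame

theorem Dcov_framePsi {S v w : ℝ × ℝ × ℝ → Fin 3 → ℝ} {p : ℝ × ℝ × ℝ} (h : IsCrossFrame S v w)
    (hS : DifferentiableAt ℝ S p) (hv : DifferentiableAt ℝ v p) {f : ℝ × ℝ × ℝ}
    (hSf : DifferentiableAt ℝ (pd3 S f) p) (e : ℝ × ℝ × ℝ) :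
    Dcov (frameA v w e) (framePsi S v w f) e p =
      ((v p ⬝ᵥ pd3 (pd3 S f) e p : ℝ) : ℂ) + Complex.I * ((w p ⬝ᵥ pd3 (pd3 S f) e p : ℝ) : ℂ) := by
  have hw := h.differentiableAt_w hS hv
  have hX : S p ⬝ᵥ pd3 S f p = 0 := h.dotProduct_fderiv_S hS f
  have hψ : framePsi S v w f =
      fun q => ((v q ⬝ᵥ pd3 S f q : ℝ) : ℂ) + Complex.I * ((w q ⬝ᵥ pd3 S f q : ℝ) : ℂ) := rfl
  rw [Dcov, hψ, fderiv_ofReal_add_I_mul_apply (hv.dotProduct hSf) (hw.dotProduct hSf),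
    fderiv_dotProduct_apply hv hSf, fderiv_dotProduct_apply hw hSf,
    h.fderiv_v_dotProduct hv hX, h.fderiv_w_dotProduct hS hv hX]
  simp only [frameA, pd3]
  push_cast
  linear_combination
    ((w p ⬝ᵥ fderiv ℝ v p e : ℝ) : ℂ) * ((w p ⬝ᵥ fderiv ℝ S p f : ℝ) : ℂ) * Complex.I_sq

theorem ContDiff.differentiable_pd3 {E : Type*} [NormedAddCommGroup E] [NormedSpace ℝ E]
    {f : ℝ × ℝ × ℝ → E} (hf : ContDiff ℝ 2 f) (e : ℝ × ℝ × ℝ) : Differentiable ℝ (pd3 f e) :=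
  ((hf.fderiv_right (m := 1) (by norm_num)).clm_apply contDiff_const).differentiable one_ne_zero

/-- For a solution of the harmonic map heat flow
`∂_s S = ΔS + S(|∂₁S|² + |∂₂S|²)` one has `ψ_s = D₁ψ₁ + D₂ψ₂`. -/
theorem psi_s_identity_heat_flow
    (S v : ℝ × ℝ × ℝ → Fin 3 → ℝ)
    (hS : ContDiff ℝ 2 S) (hv : ContDiff ℝ 2 v)
    (hS1 : ∀ p, S p ⬝ᵥ S p = 1) (hv1 : ∀ p, v p ⬝ᵥ v p = 1)
    (hSv : ∀ p, S p ⬝ᵥ v p = 0)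
    (w : ℝ × ℝ × ℝ → Fin 3 → ℝ) (hw : ∀ p, w p = crossProduct (S p) (v p))
    (hHeat : ∀ p : ℝ × ℝ × ℝ,
      pd3 S es p =
        pd3 (pd3 S e1) e1 p + pd3 (pd3 S e2) e2 p +
          ((pd3 S e1 p ⬝ᵥ pd3 S e1 p) + (pd3 S e2 p ⬝ᵥ pd3 S e2 p)) • S p) :
    ∀ p : ℝ × ℝ × ℝ,
      framePsi S v w es p =
        Dcov (frameA v w e1) (framePsi S v w e1) e1 p
          + Dcov (frameA v w e2) (framePsi S v w e2) e2 p := by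
  intro p
  have h : IsCrossFrame S v w := ⟨hS1, hv1, hSv, hw⟩
  have hSp := hS.differentiable two_ne_zero p
  have hvp := hv.differentiable two_ne_zero p
  rw [Dcov_framePsi h hSp hvp (hS.differentiable_pd3 e1 p),
    Dcov_framePsi h hSp hvp (hS.differentiable_pd3 e2 p), framePsi, hHeat p]
  simp only [dotProduct_add, dotProduct_smul, dotProduct_comm (v p) (S p), hSv, h.dotProduct_w_S,
    smul_zero, add_zero]
  push_cast
  ring
end
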